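/- Let X be an N×N real symmetric positive definite matrix, ṽ, v̄ ∈ ℝ^N, and for each n let f_n be the symmetric Volt/VAR rule with parameters (v̄_n, δ_n, σ_n, q̄_n) with 0 < δ_n < σ_n, q̄_n > 0, and α_n := q̄_n/(σ_n−δ_n). Then a vector q ∈ ℝ^N satisfies the equilibrium conditions q_n = f_n((Xq + ṽ)_n) for all n if and only if q is the (unique) minimizer over the box {q : −q̄_n ≤ q_n ≤ q̄_n for all n} of the function V(q) + C(q), where V(q) = (1/2)qᵀXq + qᵀ(ṽ − v̄) and C(q) = Σ_n [ q_n²/(2α_n) + δ_n|q_n| ]. -/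

import Mathlib

/-!
Put `u = Xq + ṽ` and `ψ(u, t) = (u - v̄) t + t²/(2α) + δ|t|` (`vvBusCost`). As `X` is symmetric,
`F p = F q + ½ (p - q)ᵀX(p - q) + Σₙ (ψₙ(uₙ, pₙ) - ψₙ(uₙ, qₙ))`.
On `[-q̄, q̄]` the rule value `f(u)` minimises `ψ(u, ·)` with quadratic growth
`ψ(u, f(u)) + (t - f(u))²/(2α) ≤ ψ(u, t)`: this is the variational inequality of the
one-dimensional problem, checked on each of the five pieces of `f`.

If `q = f(u)`, every bracket is nonnegative and positive definiteness makes `q` the unique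
minimiser. Conversely, if `q` minimises `F` on the box, comparing it with `q + l (f(u) - q)` gives
`Σ ψₙ(uₙ, qₙ) - Σ ψₙ(uₙ, f(uₙ)) ≤ O(l)` by convexity of `ψ`; letting `l → 0`, the quadratic
growth forces `q = f(u)`.
-/

open Matrix

/-- The symmetric Volt/VAR rule with reference voltage `vbar`, deadband `δ`,
saturation voltage offset `σ`, and saturation reactive power `qbar`;
its slope is `α = qbar / (σ - δ)`. -/
noncomputable def vvRule (vbar δ σ qbar : ℝ) (v : ℝ) : ℝ :=
  if v ≤ vbar - σ then qbar
  else if v ≤ vbar - δ then -(qbar / (σ - δ)) * (v - vbar + δ)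
  else if v ≤ vbar + δ then 0
  else if v ≤ vbar + σ then -(qbar / (σ - δ)) * (v - vbar - δ)
  else -qbar

open Set Filter Topology

theorem ConvexOn.le_of_forall_le_add_mul_sq {E : Type*} [AddCommGroup E] [Module ℝ E]
    {s : Set E} {g : E → ℝ} (hg : ConvexOn ℝ s g) {x y : E} (hx : x ∈ s) (hy : y ∈ s) (c : ℝ)
    (h : ∀ l ∈ Ioc (0 : ℝ) 1, g x ≤ g ((1 - l) • x + l • y) + c * l ^ 2) : g x ≤ g y := by
  have hgap : ∀ l ∈ Ioc (0 : ℝ) 1, g x - g y ≤ c * l := by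
    rintro l ⟨hl0, hl1⟩
    have hconv := hg.2 hx hy (sub_nonneg.2 hl1) hl0.le (sub_add_cancel 1 l)
    have hle := h l ⟨hl0, hl1⟩
    simp only [smul_eq_mul] at hconv
    refine le_of_mul_le_mul_left ?_ hl0
    nlinarith
  have hlim : Tendsto (fun l : ℝ => c * l) (𝓝[>] 0) (𝓝 0) := by
    simpa using ((continuous_const_mul c).tendsto 0).mono_left nhdsWithin_le_nhds
  linarith [ge_of_tendsto hlim (eventually_of_mem (Ioc_mem_nhdsGT zero_lt_one) hgap)]

theorem convexOn_univ_sum_apply {ι : Type*} [Fintype ι] {g : ι → ℝ → ℝ}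
    (hg : ∀ i, ConvexOn ℝ univ (g i)) : ConvexOn ℝ univ fun p : ι → ℝ => ∑ i, g i (p i) := by
  refine ⟨convex_univ, fun x _ y _ a b ha hb hab => ?_⟩
  simp only [Pi.add_apply, Pi.smul_apply, smul_eq_mul, Finset.mul_sum, ← Finset.sum_add_distrib]
  exact Finset.sum_le_sum fun i _ => (hg i).2 trivial trivial ha hb hab

theorem Matrix.IsSymm.dotProduct_mulVec_self_eq {ι R : Type*} [Fintype ι] [CommRing R]
    {X : Matrix ι ι R} (hX : X.IsSymm) (p q : ι → R) :
    p ⬝ᵥ X *ᵥ p = q ⬝ᵥ X *ᵥ q + 2 * (X *ᵥ q ⬝ᵥ (p - q)) + (p - q) ⬝ᵥ X *ᵥ (p - q) := by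
  have hqp : q ⬝ᵥ X *ᵥ p = X *ᵥ q ⬝ᵥ p := by
    rw [dotProduct_mulVec, ← mulVec_transpose, hX.eq]
  have hpq : p ⬝ᵥ X *ᵥ q = X *ᵥ q ⬝ᵥ p := dotProduct_comm _ _
  have hqq : X *ᵥ q ⬝ᵥ q = q ⬝ᵥ X *ᵥ q := dotProduct_comm _ _
  simp only [mulVec_sub, dotProduct_sub, sub_dotProduct, hqp, hpq, hqq]
  ring

noncomputable def vvBusCost (vbar δ σ qbar u t : ℝ) : ℝ :=
  (u - vbar) * t + t ^ 2 / (2 * (qbar / (σ - δ))) + δ * |t|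

section VoltVar

variable {vbar δ σ qbar : ℝ}

theorem vvRule_mem_Icc (hδσ : δ < σ) (hq : 0 ≤ qbar) (u : ℝ) :
    vvRule vbar δ σ qbar u ∈ Icc (-qbar) qbar := by
  have hsd : 0 < σ - δ := sub_pos.2 hδσ
  have hα : qbar / (σ - δ) * (σ - δ) = qbar := div_mul_cancel₀ qbar hsd.ne'
  have hα0 : 0 ≤ qbar / (σ - δ) := div_nonneg hq hsd.le
  unfold vvRule
  split_ifs <;> constructor <;> nlinarith

theorem vvRule_variational_ineq (hδ : 0 ≤ δ) (hδσ : δ < σ) (hq : 0 < qbar) (u : ℝ) {t : ℝ}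
    (ht : t ∈ Icc (-qbar) qbar) :
    0 ≤ (u - vbar + vvRule vbar δ σ qbar u / (qbar / (σ - δ))) * (t - vvRule vbar δ σ qbar u)
      + δ * (|t| - |vvRule vbar δ σ qbar u|) := by
  obtain ⟨ht₁, ht₂⟩ := ht
  have hsd : 0 < σ - δ := sub_pos.2 hδσ
  have hα : 0 < qbar / (σ - δ) := div_pos hq hsd
  have hqα : qbar / (qbar / (σ - δ)) = σ - δ := by field_simp
  have hslope (w : ℝ) : -(qbar / (σ - δ)) * w / (qbar / (σ - δ)) = -w := by field_simp
  have ht_le := le_abs_self t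
  have hnegt_le := neg_abs_le t
  unfold vvRule
  split_ifs
  · rw [hqα, abs_of_pos hq]
    nlinarith
  · rw [hslope, abs_of_nonneg (a := -(qbar / (σ - δ)) * (u - vbar + δ)) (by nlinarith)]
    nlinarith
  · rw [zero_div, abs_zero]
    nlinarith [abs_le.2 (⟨by linarith, by linarith⟩ : -δ ≤ u - vbar ∧ u - vbar ≤ δ)]
  · rw [hslope, abs_of_nonpos (a := -(qbar / (σ - δ)) * (u - vbar - δ)) (by nlinarith)]
    nlinarith
  · rw [neg_div, hqα, abs_neg, abs_of_pos hq]
    nlinarith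

theorem vvBusCost_vvRule_add_sq_le (hδ : 0 ≤ δ) (hδσ : δ < σ) (hq : 0 < qbar) (u : ℝ) {t : ℝ}
    (ht : t ∈ Icc (-qbar) qbar) :
    vvBusCost vbar δ σ qbar u (vvRule vbar δ σ qbar u)
      + (t - vvRule vbar δ σ qbar u) ^ 2 / (2 * (qbar / (σ - δ)))
      ≤ vvBusCost vbar δ σ qbar u t := by
  have hvi := vvRule_variational_ineq (vbar := vbar) hδ hδσ hq u ht
  set f := vvRule vbar δ σ qbar u
  set α := qbar / (σ - δ)
  have hgap : vvBusCost vbar δ σ qbar u t - (vvBusCost vbar δ σ qbar u f + (t - f) ^ 2 / (2 * α))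
      = (u - vbar + f / α) * (t - f) + δ * (|t| - |f|) := by
    unfold vvBusCost
    ring
  linarith

theorem vvBusCost_vvRule_le (hδ : 0 ≤ δ) (hδσ : δ < σ) (hq : 0 < qbar) (u : ℝ) {t : ℝ}
    (ht : t ∈ Icc (-qbar) qbar) :
    vvBusCost vbar δ σ qbar u (vvRule vbar δ σ qbar u) ≤ vvBusCost vbar δ σ qbar u t := by
  have hα := div_pos hq (sub_pos.2 hδσ)
  exact (le_add_of_nonneg_right (by positivity)).trans (vvBusCost_vvRule_add_sq_le hδ hδσ hq u ht)

theorem convexOn_vvBusCost (hδ : 0 ≤ δ) (hδσ : δ < σ) (hq : 0 ≤ qbar) (u : ℝ) :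
    ConvexOn ℝ univ (vvBusCost vbar δ σ qbar u) := by
  have hc : 0 ≤ (2 * (qbar / (σ - δ)))⁻¹ := by
    have : 0 ≤ qbar / (σ - δ) := div_nonneg hq (sub_pos.2 hδσ).le
    positivity
  have hlin := (LinearMap.mul ℝ ℝ (u - vbar)).convexOn convex_univ
  have hsq := (even_two.convexOn_pow (𝕜 := ℝ)).smul hc
  have habs := (convexOn_norm (E := ℝ) convex_univ).smul hδ
  refine ((hlin.add hsq).add habs).congr fun t _ => ?_
  simp only [vvBusCost, Pi.add_apply, LinearMap.mul_apply', smul_eq_mul, Real.norm_eq_abs]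
  ring

end VoltVar

noncomputable def vvObjective {ι : Type*} [Fintype ι] (X : Matrix ι ι ℝ)
    (vtil vbar δ σ qbar p : ι → ℝ) : ℝ :=
  (1 / 2) * (p ⬝ᵥ X *ᵥ p) + p ⬝ᵥ (vtil - vbar)
    + ∑ n, (p n ^ 2 / (2 * (qbar n / (σ n - δ n))) + δ n * |p n|)

section VoltVarNetwork

variable {ι : Type*} [Fintype ι] {X : Matrix ι ι ℝ} {vtil vbar δ σ qbar : ι → ℝ}

theorem vvObjective_eq_add (hX : X.IsSymm) (p q : ι → ℝ) :
    vvObjective X vtil vbar δ σ qbar p = vvObjective X vtil vbar δ σ qbar q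
      + 1 / 2 * ((p - q) ⬝ᵥ X *ᵥ (p - q))
      + (∑ n, vvBusCost (vbar n) (δ n) (σ n) (qbar n) ((X *ᵥ q + vtil) n) (p n)
        - ∑ n, vvBusCost (vbar n) (δ n) (σ n) (qbar n) ((X *ᵥ q + vtil) n) (q n)) := by
  have hsum (r : ι → ℝ) :
      ∑ n, vvBusCost (vbar n) (δ n) (σ n) (qbar n) ((X *ᵥ q + vtil) n) (r n)
        = (X *ᵥ q + vtil - vbar) ⬝ᵥ r
          + ∑ n, (r n ^ 2 / (2 * (qbar n / (σ n - δ n))) + δ n * |r n|) := by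
    simp only [vvBusCost, dotProduct, Pi.sub_apply, Finset.sum_add_distrib, add_assoc]
  unfold vvObjective
  rw [hX.dotProduct_mulVec_self_eq p q, hsum, hsum]
  simp only [add_dotProduct, sub_dotProduct, dotProduct_sub, dotProduct_comm p, dotProduct_comm q]
  ring

theorem vvObjective_add_le_of_forall_eq_vvRule (hX : X.IsSymm) (hδ : ∀ n, 0 ≤ δ n)
    (hδσ : ∀ n, δ n < σ n) (hq : ∀ n, 0 < qbar n) {q : ι → ℝ}
    (hfix : ∀ n, q n = vvRule (vbar n) (δ n) (σ n) (qbar n) ((X *ᵥ q + vtil) n)) {p : ι → ℝ}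
    (hp : ∀ n, p n ∈ Icc (-qbar n) (qbar n)) :
    vvObjective X vtil vbar δ σ qbar q + 1 / 2 * ((p - q) ⬝ᵥ X *ᵥ (p - q))
      ≤ vvObjective X vtil vbar δ σ qbar p := by
  have hbus (n : ι) : vvBusCost (vbar n) (δ n) (σ n) (qbar n) ((X *ᵥ q + vtil) n) (q n)
      ≤ vvBusCost (vbar n) (δ n) (σ n) (qbar n) ((X *ᵥ q + vtil) n) (p n) := by
    have hmin := vvBusCost_vvRule_le (vbar := vbar n) (hδ n) (hδσ n) (hq n)
      ((X *ᵥ q + vtil) n) (hp n)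
    rwa [← hfix n] at hmin
  rw [vvObjective_eq_add hX p q]
  linarith [Finset.sum_le_sum fun n (_ : n ∈ Finset.univ) => hbus n]

theorem eq_vvRule_of_sum_vvBusCost_le (hδ : ∀ n, 0 ≤ δ n) (hδσ : ∀ n, δ n < σ n)
    (hq : ∀ n, 0 < qbar n) (u : ι → ℝ) {q : ι → ℝ} (hqB : ∀ n, q n ∈ Icc (-qbar n) (qbar n))
    (hle : ∑ n, vvBusCost (vbar n) (δ n) (σ n) (qbar n) (u n) (q n)
      ≤ ∑ n, vvBusCost (vbar n) (δ n) (σ n) (qbar n) (u n)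
        (vvRule (vbar n) (δ n) (σ n) (qbar n) (u n))) :
    ∀ n, q n = vvRule (vbar n) (δ n) (σ n) (qbar n) (u n) := by
  by_contra! ⟨n, hn⟩
  refine hle.not_gt (Finset.sum_lt_sum (fun m _ => vvBusCost_vvRule_le (hδ m) (hδσ m) (hq m)
    (u m) (hqB m)) ⟨n, Finset.mem_univ n, ?_⟩)
  have hα := div_pos (hq n) (sub_pos.2 (hδσ n))
  have hne := sub_ne_zero.2 hn
  have hgap : 0 < (q n - vvRule (vbar n) (δ n) (σ n) (qbar n) (u n)) ^ 2
      / (2 * (qbar n / (σ n - δ n))) := by positivity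
  linarith [vvBusCost_vvRule_add_sq_le (vbar := vbar n) (hδ n) (hδσ n) (hq n) (u n) (hqB n)]

theorem forall_eq_vvRule_of_forall_vvObjective_le (hX : X.IsSymm) (hδ : ∀ n, 0 ≤ δ n)
    (hδσ : ∀ n, δ n < σ n) (hq : ∀ n, 0 < qbar n) {q : ι → ℝ}
    (hqB : ∀ n, q n ∈ Icc (-qbar n) (qbar n))
    (hmin : ∀ p : ι → ℝ, (∀ n, p n ∈ Icc (-qbar n) (qbar n)) →
      vvObjective X vtil vbar δ σ qbar q ≤ vvObjective X vtil vbar δ σ qbar p) :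
    ∀ n, q n = vvRule (vbar n) (δ n) (σ n) (qbar n) ((X *ᵥ q + vtil) n) := by
  set u := X *ᵥ q + vtil
  set p : ι → ℝ := fun n => vvRule (vbar n) (δ n) (σ n) (qbar n) (u n)
  have hpB (n : ι) : p n ∈ Icc (-qbar n) (qbar n) := vvRule_mem_Icc (hδσ n) (hq n).le (u n)
  refine eq_vvRule_of_sum_vvBusCost_le hδ hδσ hq u hqB ?_
  refine (convexOn_univ_sum_apply fun n => convexOn_vvBusCost (hδ n) (hδσ n) (hq n).le (u n))
    |>.le_of_forall_le_add_mul_sq (x := q) (y := p) trivial trivial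
      (1 / 2 * ((p - q) ⬝ᵥ X *ᵥ (p - q))) fun l ⟨hl₀, hl₁⟩ => ?_
  have hseg := hmin ((1 - l) • q + l • p) fun n =>
    convex_Icc _ _ (hqB n) (hpB n) (sub_nonneg.2 hl₁) hl₀.le (sub_add_cancel 1 l)
  have hdir : (1 - l) • q + l • p - q = l • (p - q) := by module
  rw [vvObjective_eq_add hX ((1 - l) • q + l • p) q, hdir, mulVec_smul, smul_dotProduct,
    dotProduct_smul] at hseg
  simp only [smul_eq_mul] at hseg
  nlinarith

end VoltVarNetwork

/-- Variational characterization of the Volt/VAR equilibrium: `q` is an equilibrium of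
the Volt/VAR dynamics iff it is the unique minimizer of `V(q) + C(q)` over the box
`-qbar ≤ q ≤ qbar`, where `V(q) = ½ qᵀXq + qᵀ(ṽ - v̄)` and
`C(q) = Σ_n qₙ²/(2αₙ) + δₙ|qₙ|`. -/
theorem stmt_9 {N : ℕ} (X : Matrix (Fin N) (Fin N) ℝ) (hX : X.PosDef)
    (hXsymm : X.IsSymm) (vtil vbar δ σ qbar : Fin N → ℝ)
    (hδ : ∀ n, 0 < δ n) (hδσ : ∀ n, δ n < σ n) (hq : ∀ n, 0 < qbar n)
    (F : (Fin N → ℝ) → ℝ)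
    (hF : ∀ p, F p = (1 / 2) * (p ⬝ᵥ X.mulVec p) + p ⬝ᵥ (vtil - vbar)
      + ∑ n, (p n ^ 2 / (2 * (qbar n / (σ n - δ n))) + δ n * |p n|))
    (B : Set (Fin N → ℝ))
    (hB : B = {p | ∀ n, -qbar n ≤ p n ∧ p n ≤ qbar n})
    (q : Fin N → ℝ) :
    (∀ n, q n = vvRule (vbar n) (δ n) (σ n) (qbar n) ((X.mulVec q + vtil) n)) ↔
    (q ∈ B ∧ (∀ p ∈ B, F q ≤ F p) ∧
      ∀ p ∈ B, (∀ r ∈ B, F p ≤ F r) → p = q) := by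
  obtain rfl : F = vvObjective X vtil vbar δ σ qbar := funext hF
  subst hB
  have hδ₀ (n : Fin N) : 0 ≤ δ n := (hδ n).le
  constructor
  · intro hfix
    have hqB (n : Fin N) : q n ∈ Icc (-qbar n) (qbar n) := by
      rw [hfix n]
      exact vvRule_mem_Icc (hδσ n) (hq n).le _
    have hgrowth (p : Fin N → ℝ) (hp : ∀ n, p n ∈ Icc (-qbar n) (qbar n)) :=
      vvObjective_add_le_of_forall_eq_vvRule hXsymm hδ₀ hδσ hq hfix hp
    refine ⟨hqB, fun p hp => ?_, fun p hp hpmin => ?_⟩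
    · have hquad := hX.posSemidef.dotProduct_mulVec_nonneg (p - q)
      rw [star_trivial] at hquad
      linarith [hgrowth p hp]
    · by_contra hne
      have hquad := hX.dotProduct_mulVec_pos (sub_ne_zero.2 hne)
      rw [star_trivial] at hquad
      linarith [hgrowth p hp, hpmin q hqB]
  · rintro ⟨hqB, hmin, -⟩
    exact forall_eq_vvRule_of_forall_vvObjective_le hXsymm hδ₀ hδσ hq hqB hmin
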